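/- Let W be a random variable with P(W>0)=1, E[W]=1 and E[W log₂ W] < 1. Then for every ζ₀ ∈ [0,1] there exists a unique ζ ∈ [0,1] satisfying 2^{ζ₀} = 2^{ζ} / E[W^{ζ}] (equivalently, φ(ζ) = ζ₀ where φ(s) = s − log₂ E[W^s]). -/

import Mathlib

/-!
Put `h(s) = E[(W/2)^s] = E[W^s] / 2^s`, so that the equation reads `h(ζ) = 2^{-ζ₀}`, with
`h(0) = 1`, `h(1) = 1/2` and `2^{-ζ₀} ∈ [1/2, 1]`. By dominated convergence `h` is continuous on
`[0,1]`, and it is convex as an average of the convex functions `s ↦ (w/2)^s`; the intermediate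
value theorem gives a solution. For uniqueness it suffices that `h(s) > h(1)` for `s < 1`, since a
convex function lying strictly above its value at the right endpoint is strictly decreasing.
Under the size-biased law `W dP`, Jensen's inequality gives
`E[W^s] = E[W · e^{(s-1) log W}] ≥ e^{(s-1) E[W log W]} > e^{(s-1) log 2} = 2^{s-1}`,
where the last step uses `E[W log W] < log 2` and `s < 1`.
-/

open MeasureTheory Set Real

lemma Real.rpow_le_one_add {x p : ℝ} (hx : 0 ≤ x) (hp : p ∈ Icc (0 : ℝ) 1) : x ^ p ≤ 1 + x := by
  rcases le_total x 1 with h | h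
  · linarith [rpow_le_one hx h hp.1]
  · linarith [rpow_le_self_of_one_le h hp.2]

lemma ConvexOn.strictAntiOn_Icc_of_lt_right {𝕜 : Type*} [Field 𝕜] [LinearOrder 𝕜]
    [IsStrictOrderedRing 𝕜] {f : 𝕜 → 𝕜} {a b : 𝕜} (hf : ConvexOn 𝕜 (Icc a b) f)
    (hlt : ∀ x ∈ Ico a b, f b < f x) : StrictAntiOn f (Icc a b) := by
  intro x hx y hy hxy
  rcases hy.2.eq_or_lt with rfl | hyb
  · exact hlt x ⟨hx.1, hxy⟩
  · have hslope := hf.slope_mono_adjacent hx (right_mem_Icc.2 (hy.1.trans hy.2)) hxy hyb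
    have hright : (f b - f y) / (b - y) < 0 :=
      div_neg_of_neg_of_pos (sub_neg.2 (hlt y ⟨hy.1, hyb⟩)) (sub_pos.2 hyb)
    exact sub_neg.1 (neg_of_div_neg_left (hslope.trans_lt hright) (sub_pos.2 hxy).le)

lemma StrictAntiOn.existsUnique_mem_Icc_eq {α β : Type*} [ConditionallyCompleteLinearOrder α]
    [DenselyOrdered α] [TopologicalSpace α] [OrderTopology α] [LinearOrder β]
    [TopologicalSpace β] [OrderClosedTopology β] {f : α → β} {a b : α} (hab : a ≤ b)
    (hf : StrictAntiOn f (Icc a b)) (hcont : ContinuousOn f (Icc a b)) {y : β}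
    (hy : y ∈ Icc (f b) (f a)) : ∃! x, x ∈ Icc a b ∧ f x = y := by
  obtain ⟨x, hx, rfl⟩ := intermediate_value_Icc' hab hcont hy
  exact ⟨x, ⟨hx, rfl⟩, fun x' ⟨hx', hfx'⟩ => hf.injOn hx' hx hfx'⟩

section RpowMoments

variable {Ω : Type*} [MeasurableSpace Ω] {μ : Measure Ω} {X : Ω → ℝ}

lemma integrable_rpow_of_mem_Icc [IsFiniteMeasure μ] (hX : Integrable X μ)
    (hX0 : ∀ᵐ ω ∂μ, 0 ≤ X ω) {p : ℝ} (hp : p ∈ Icc (0 : ℝ) 1) :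
    Integrable (fun ω => X ω ^ p) μ := by
  have hbound : Integrable (fun ω => 1 + X ω) μ := (integrable_const 1).add hX
  refine hbound.mono (hX.aemeasurable.pow_const p).aestronglyMeasurable ?_
  filter_upwards [hX0] with ω hω
  rw [norm_of_nonneg (rpow_nonneg hω p), norm_of_nonneg (by linarith)]
  exact rpow_le_one_add hω hp

lemma continuousOn_integral_rpow [IsFiniteMeasure μ] (hX : Integrable X μ)
    (hX0 : ∀ᵐ ω ∂μ, 0 < X ω) : ContinuousOn (fun p => ∫ ω, X ω ^ p ∂μ) (Icc (0 : ℝ) 1) := by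
  refine continuousOn_of_dominated (bound := fun ω => 1 + X ω)
    (fun p _ => (hX.aemeasurable.pow_const p).aestronglyMeasurable) (fun p hp => ?_)
    ((integrable_const 1).add hX) ?_
  · filter_upwards [hX0] with ω hω
    rw [norm_of_nonneg (rpow_nonneg hω.le p)]
    exact rpow_le_one_add hω.le hp
  · filter_upwards [hX0] with ω hω
    exact fun p _ => (continuousAt_const_rpow hω.ne').continuousWithinAt

lemma convexOn_integral_rpow [IsFiniteMeasure μ] (hX : Integrable X μ)
    (hX0 : ∀ᵐ ω ∂μ, 0 < X ω) : ConvexOn ℝ (Icc (0 : ℝ) 1) (fun p => ∫ ω, X ω ^ p ∂μ) := by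
  refine ⟨convex_Icc 0 1, fun s hs t ht a b ha hb hab => ?_⟩
  have hint : ∀ p ∈ Icc (0 : ℝ) 1, Integrable (fun ω => X ω ^ p) μ :=
    fun p hp => integrable_rpow_of_mem_Icc hX (hX0.mono fun _ h => h.le) hp
  have hpoint : ∀ᵐ ω ∂μ, X ω ^ (a • s + b • t) ≤ a • X ω ^ s + b • X ω ^ t := by
    filter_upwards [hX0] with ω hω
    exact (convexOn_rpow_left hω).2 (mem_univ s) (mem_univ t) ha hb hab
  simp only [smul_eq_mul] at hpoint ⊢
  calc ∫ ω, X ω ^ (a * s + b * t) ∂μ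
      ≤ ∫ ω, (a * X ω ^ s + b * X ω ^ t) ∂μ :=
        integral_mono_ae (hint _ (convex_Icc 0 1 hs ht ha hb hab))
          (((hint s hs).const_mul a).add ((hint t ht).const_mul b)) hpoint
    _ = a * ∫ ω, X ω ^ s ∂μ + b * ∫ ω, X ω ^ t ∂μ := by
        rw [integral_add ((hint s hs).const_mul a) ((hint t ht).const_mul b),
          integral_const_mul, integral_const_mul]

lemma integral_div_const_rpow (hX0 : ∀ᵐ ω ∂μ, 0 ≤ X ω) {c : ℝ} (hc : 0 ≤ c) (p : ℝ) :
    ∫ ω, (X ω / c) ^ p ∂μ = (∫ ω, X ω ^ p ∂μ) / c ^ p := by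
  rw [← integral_div]
  exact integral_congr_ae (hX0.mono fun ω h => div_rpow h hc p)

/-- Jensen's inequality for `exp` under the size-biased measure `X dμ`, proved by integrating the
tangent line of `exp` at the point `(p - 1) E[X log X]` against `X dμ`. -/
lemma exp_mul_integral_mul_log_le_integral_rpow (hX : Integrable X μ)
    (hX1 : ∫ ω, X ω ∂μ = 1) (hX0 : ∀ᵐ ω ∂μ, 0 < X ω)
    (hXlog : Integrable (fun ω => X ω * log (X ω)) μ) {p : ℝ}
    (hp : Integrable (fun ω => X ω ^ p) μ) :
    exp ((p - 1) * ∫ ω, X ω * log (X ω) ∂μ) ≤ ∫ ω, X ω ^ p ∂μ := by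
  set c := (p - 1) * ∫ ω, X ω * log (X ω) ∂μ
  have htangent : ∀ᵐ ω ∂μ,
      exp c * (X ω + (p - 1) * (X ω * log (X ω)) - c * X ω) ≤ X ω ^ p := by
    filter_upwards [hX0] with ω hω
    have hsplit : X ω ^ p = exp c * (X ω * exp ((p - 1) * log (X ω) - c)) := by
      calc X ω ^ p = exp (log (X ω) + c + ((p - 1) * log (X ω) - c)) := by
            rw [rpow_def_of_pos hω]; ring_nf
        _ = _ := by rw [exp_add, exp_add, exp_log hω]; ring
    rw [hsplit]
    calc exp c * (X ω + (p - 1) * (X ω * log (X ω)) - c * X ω)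
        = exp c * (X ω * ((p - 1) * log (X ω) - c + 1)) := by ring
      _ ≤ exp c * (X ω * exp ((p - 1) * log (X ω) - c)) := by
          gcongr
          exact add_one_le_exp _
  have hlinear : Integrable (fun ω => X ω + (p - 1) * (X ω * log (X ω))) μ :=
    hX.add (hXlog.const_mul _)
  have hlower : Integrable (fun ω => X ω + (p - 1) * (X ω * log (X ω)) - c * X ω) μ :=
    hlinear.sub (hX.const_mul _)
  calc exp c = ∫ ω, exp c * (X ω + (p - 1) * (X ω * log (X ω)) - c * X ω) ∂μ := by
        rw [integral_const_mul, integral_sub hlinear (hX.const_mul _),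
          integral_add hX (hXlog.const_mul _), integral_const_mul, integral_const_mul, hX1]
        ring
    _ ≤ ∫ ω, X ω ^ p ∂μ := integral_mono_ae (hlower.const_mul _) hp htangent

lemma rpow_sub_one_lt_integral_rpow (hX : Integrable X μ) (hX1 : ∫ ω, X ω ∂μ = 1)
    (hX0 : ∀ᵐ ω ∂μ, 0 < X ω) {b : ℝ} (hb : 1 < b)
    (hXlog : Integrable (fun ω => X ω * logb b (X ω)) μ)
    (hlt : ∫ ω, X ω * logb b (X ω) ∂μ < 1) {p : ℝ} (hp1 : p < 1)
    (hp : Integrable (fun ω => X ω ^ p) μ) : b ^ (p - 1) < ∫ ω, X ω ^ p ∂μ := by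
  have hlogb : (fun ω => X ω * log (X ω)) = fun ω => X ω * logb b (X ω) * log b :=
    funext fun ω => by rw [mul_assoc, logb, div_mul_cancel₀ _ (log_pos hb).ne']
  have hlt' : ∫ ω, X ω * log (X ω) ∂μ < log b := by
    rw [hlogb, integral_mul_const]
    exact mul_lt_of_lt_one_left (log_pos hb) hlt
  calc b ^ (p - 1) = exp ((p - 1) * log b) := by rw [rpow_def_of_pos (by linarith), mul_comm]
    _ < exp ((p - 1) * ∫ ω, X ω * log (X ω) ∂μ) :=
        exp_lt_exp.2 (mul_lt_mul_of_neg_left hlt' (by linarith))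
    _ ≤ ∫ ω, X ω ^ p ∂μ :=
        exp_mul_integral_mul_log_le_integral_rpow hX hX1 hX0 (hlogb ▸ hXlog.mul_const _) hp

end RpowMoments

theorem KPZ_equation_unique_solution_general
    {Ω : Type*} [MeasurableSpace Ω] (P : Measure Ω) [IsProbabilityMeasure P]
    (W : Ω → ℝ) (hWpos : ∀ᵐ ω ∂P, 0 < W ω)
    (hWint : Integrable W P) (hWmean : ∫ ω, W ω ∂P = 1)
    (hlogint : Integrable (fun ω => W ω * Real.logb 2 (W ω)) P)
    (hlog : ∫ ω, W ω * Real.logb 2 (W ω) ∂P < 1) :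
    ∀ ζ₀ ∈ Set.Icc (0:ℝ) 1,
      ∃! ζ : ℝ, ζ ∈ Set.Icc (0:ℝ) 1 ∧ (2:ℝ) ^ ζ₀ = 2 ^ ζ / ∫ ω, W ω ^ ζ ∂P := by
  intro ζ₀ hζ₀
  set h : ℝ → ℝ := fun s => ∫ ω, (W ω / 2) ^ s ∂P
  have hW0 : ∀ᵐ ω ∂P, 0 ≤ W ω := hWpos.mono fun _ => le_of_lt
  have hW2pos : ∀ᵐ ω ∂P, 0 < W ω / 2 := hWpos.mono fun _ => half_pos
  have h_eq (s : ℝ) : h s = (∫ ω, W ω ^ s ∂P) / 2 ^ s := integral_div_const_rpow hW0 zero_le_two s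
  have h_zero : h 0 = 1 := by simp [h]
  have h_one : h 1 = 1 / 2 := by simp only [h_eq, rpow_one, hWmean]
  have h_gt : ∀ s ∈ Ico (0 : ℝ) 1, h 1 < h s := fun s hs => by
    rw [h_one, h_eq, lt_div_iff₀ (by positivity), one_div_mul_eq_div, ← rpow_sub_one two_ne_zero]
    exact rpow_sub_one_lt_integral_rpow hWint hWmean hWpos one_lt_two hlogint hlog hs.2
      (integrable_rpow_of_mem_Icc hWint hW0 ⟨hs.1, hs.2.le⟩)
  have hanti : StrictAntiOn h (Icc 0 1) :=
    (convexOn_integral_rpow (hWint.div_const 2) hW2pos).strictAntiOn_Icc_of_lt_right h_gt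
  have hsol (z : ℝ) : (2 : ℝ) ^ ζ₀ = 2 ^ z / ∫ ω, W ω ^ z ∂P ↔ h z = (2 ^ ζ₀)⁻¹ := by
    rw [h_eq, ← inv_div]
    exact eq_comm.trans inv_eq_iff_eq_inv
  have hpow : (1 : ℝ) ≤ 2 ^ ζ₀ ∧ (2 : ℝ) ^ ζ₀ ≤ 2 :=
    ⟨one_le_rpow one_le_two hζ₀.1,
      (rpow_le_rpow_of_exponent_le one_le_two hζ₀.2).trans_eq (rpow_one 2)⟩
  have htarget : ((2 : ℝ) ^ ζ₀)⁻¹ ∈ Icc (h 1) (h 0) := by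
    rw [h_one, h_zero, one_div]
    exact ⟨inv_anti₀ (by positivity) hpow.2, inv_le_one_of_one_le₀ hpow.1⟩
  exact (existsUnique_congr fun z => and_congr_right' (hsol z)).2 <| hanti.existsUnique_mem_Icc_eq
    zero_le_one (continuousOn_integral_rpow (hWint.div_const 2) hW2pos) htarget

/-- For a positive random variable `W` with `E[W] = 1` and `E[W log₂ W] < 1`,
for every `ζ₀ ∈ [0,1]` there is a unique `ζ ∈ [0,1]` with `2^{ζ₀} = 2^{ζ} / E[W^{ζ}]`. -/
theorem KPZ_equation_unique_solution
    {Ω : Type*} [MeasurableSpace Ω] (P : Measure Ω) [IsProbabilityMeasure P]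
    (W : Ω → ℝ) (hWm : Measurable W) (hWpos : ∀ᵐ ω ∂P, 0 < W ω)
    (hWint : Integrable W P) (hWmean : ∫ ω, W ω ∂P = 1)
    (hlogint : Integrable (fun ω => W ω * Real.logb 2 (W ω)) P)
    (hlog : ∫ ω, W ω * Real.logb 2 (W ω) ∂P < 1) :
    ∀ ζ₀ ∈ Set.Icc (0:ℝ) 1,
      ∃! ζ : ℝ, ζ ∈ Set.Icc (0:ℝ) 1 ∧ (2:ℝ) ^ ζ₀ = 2 ^ ζ / ∫ ω, W ω ^ ζ ∂P :=
  KPZ_equation_unique_solution_general P W hWpos hWint hWmean hlogint hlog
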